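/- arXiv:2405.19189 — 2 statements merged into one kernel-verified Lean document; each statement's English description precedes it below -/
import Mathlib

section
/- (Return gap for single-step dynamics models.) Let $S$ be a finite state space, $P, P_m : S \to \Delta(S)$ two transition kernels with $D_{TV}(P_m(\cdot\mid s), P(\cdot\mid s)) \le \epsilon_m$ for all $s$, $r : S \to \mathbb{R}$ with $|r(s)| \le R$, and $\gamma \in [0,1)$. Starting from a common initial distribution $\mu_0$, define the state marginals $\mu^t$ and $\mu_m^t$ by pushing $\mu_0$ forward $t$ times through $P$ and $P_m$ respectively, and define discounted returns $J(P) = \sum_{t\ge 0}\gamma^t \mathbb{E}_{s\sim\mu^t}[r(s)]$ and $J(P_m)$ analogously. Then $|J(P) - J(P_m)| \le \frac{2R\gamma\epsilon_m}{(1-\gamma)^2}$. -/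
set_option maxHeartbeats 1000000 in
/-- Return gap for single-step dynamics models (Lemma B.3 of MBPO). -/
theorem single_step_return_gap
    {S : Type*} [Fintype S]
    (P Pm : S → S → ℝ)      -- `P s' s` is the probability of `s` given `s'`
    (hP_nonneg : ∀ s' s, 0 ≤ P s' s) (hPm_nonneg : ∀ s' s, 0 ≤ Pm s' s)
    (hP_sum : ∀ s', ∑ s, P s' s = 1) (hPm_sum : ∀ s', ∑ s, Pm s' s = 1)
    (εm : ℝ)
    (hkernel : ∀ s', (1 / 2) * ∑ s, |Pm s' s - P s' s| ≤ εm)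
    (μ0 : S → ℝ) (hμ0_nonneg : ∀ s, 0 ≤ μ0 s) (hμ0_sum : ∑ s, μ0 s = 1)
    (μ μm : ℕ → S → ℝ)
    (hμ_init : μ 0 = μ0) (hμm_init : μm 0 = μ0)
    (hμ_rec : ∀ t s, μ (t + 1) s = ∑ s', P s' s * μ t s')
    (hμm_rec : ∀ t s, μm (t + 1) s = ∑ s', Pm s' s * μm t s')
    (r : S → ℝ) (R : ℝ) (hr : ∀ s, |r s| ≤ R)
    (γ : ℝ) (hγ0 : 0 ≤ γ) (hγ1 : γ < 1)
    (J Jm : ℝ)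
    (hJ : J = ∑' t : ℕ, γ ^ t * ∑ s, μ t s * r s)
    (hJm : Jm = ∑' t : ℕ, γ ^ t * ∑ s, μm t s * r s) :
    |J - Jm| ≤ 2 * R * γ * εm / (1 - γ) ^ 2 := by
  -- S is nonempty
  have hS : Nonempty S := by
    rcases isEmpty_or_nonempty S with h | h
    · exfalso; rw [Finset.univ_eq_empty] at hμ0_sum; simp at hμ0_sum
    · exact h
  obtain ⟨s₀⟩ := hS
  have hεm : 0 ≤ εm := by
    have h1 : (0:ℝ) ≤ (1/2) * ∑ s, |Pm s₀ s - P s₀ s| := by positivity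
    linarith [hkernel s₀]
  have hR : 0 ≤ R := le_trans (abs_nonneg _) (hr s₀)
  -- μ and μm are distributions at every time
  have hdist : ∀ (Q : S → S → ℝ), (∀ s' s, 0 ≤ Q s' s) → (∀ s', ∑ s, Q s' s = 1) →
      ∀ (ν : ℕ → S → ℝ), ν 0 = μ0 → (∀ t s, ν (t+1) s = ∑ s', Q s' s * ν t s') →
      ∀ t, (∀ s, 0 ≤ ν t s) ∧ ∑ s, ν t s = 1 := by
    intro Q hQn hQs ν hinit hrec t
    induction t with
    | zero => rw [hinit]; exact ⟨hμ0_nonneg, hμ0_sum⟩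
    | succ t ih =>
      constructor
      · intro s; rw [hrec]
        exact Finset.sum_nonneg fun s' _ => mul_nonneg (hQn s' s) (ih.1 s')
      · simp only [hrec]
        rw [Finset.sum_comm]
        calc ∑ s', ∑ s, Q s' s * ν t s' = ∑ s', ν t s' * ∑ s, Q s' s := by
              simp [Finset.mul_sum, mul_comm]
          _ = 1 := by simp [hQs, ih.2]
  have hμd := hdist P hP_nonneg hP_sum μ hμ_init hμ_rec
  have hμmd := hdist Pm hPm_nonneg hPm_sum μm hμm_init hμm_rec
  -- TV compounding bound
  have key : ∀ t : ℕ, ∑ s, |μm t s - μ t s| ≤ 2 * t * εm := by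
    intro t
    induction t with
    | zero => simp [hμ_init, hμm_init]
    | succ t ih =>
      have step : ∑ s, |μm (t+1) s - μ (t+1) s| ≤ (∑ s, |μm t s - μ t s|) + 2 * εm := by
        have h1 : ∀ s, |μm (t+1) s - μ (t+1) s| ≤
            ∑ s', (Pm s' s * |μm t s' - μ t s'| + |Pm s' s - P s' s| * μ t s') := by
          intro s
          rw [hμm_rec, hμ_rec, ← Finset.sum_sub_distrib]
          refine le_trans (Finset.abs_sum_le_sum_abs _ _) (Finset.sum_le_sum ?_)
          intro s' _
          have heq : Pm s' s * μm t s' - P s' s * μ t s'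
              = Pm s' s * (μm t s' - μ t s') + (Pm s' s - P s' s) * μ t s' := by ring
          rw [heq]
          refine le_trans (abs_add_le _ _) ?_
          rw [abs_mul, abs_mul, abs_of_nonneg (hPm_nonneg s' s),
            abs_of_nonneg ((hμd t).1 s')]
        calc ∑ s, |μm (t+1) s - μ (t+1) s|
            ≤ ∑ s, ∑ s', (Pm s' s * |μm t s' - μ t s'| + |Pm s' s - P s' s| * μ t s') :=
              Finset.sum_le_sum fun s _ => h1 s
          _ = (∑ s', |μm t s' - μ t s'| * ∑ s, Pm s' s)
              + ∑ s', μ t s' * ∑ s, |Pm s' s - P s' s| := by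
              simp only [Finset.sum_add_distrib]
              congr 1
              · rw [Finset.sum_comm]
                exact Finset.sum_congr rfl fun s' _ => by
                  rw [Finset.mul_sum]
                  exact Finset.sum_congr rfl fun s _ => mul_comm _ _
              · rw [Finset.sum_comm]
                exact Finset.sum_congr rfl fun s' _ => by
                  rw [Finset.mul_sum]
                  exact Finset.sum_congr rfl fun s _ => mul_comm _ _
          _ ≤ (∑ s', |μm t s' - μ t s'|) + ∑ s', μ t s' * (2 * εm) := by
              apply add_le_add
              · exact le_of_eq (Finset.sum_congr rfl fun s' _ => by rw [hPm_sum, mul_one])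
              · refine Finset.sum_le_sum fun s' _ =>
                  mul_le_mul_of_nonneg_left ?_ ((hμd t).1 s')
                linarith [hkernel s']
          _ = (∑ s, |μm t s - μ t s|) + 2 * εm := by
              rw [← Finset.sum_mul, (hμd t).2]; ring
      push_cast
      push_cast at ih
      linarith
  -- bound on reward gap at each time
  have hgap : ∀ t : ℕ, |(∑ s, μ t s * r s) - ∑ s, μm t s * r s| ≤ 2 * R * t * εm := by
    intro t
    have : (∑ s, μ t s * r s) - ∑ s, μm t s * r s = ∑ s, (μ t s - μm t s) * r s := by
      rw [← Finset.sum_sub_distrib]; congr 1; ext s; ring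
    rw [this]
    calc |∑ s, (μ t s - μm t s) * r s| ≤ ∑ s, |(μ t s - μm t s) * r s| :=
          Finset.abs_sum_le_sum_abs _ _
      _ ≤ ∑ s, |μm t s - μ t s| * R := by
          refine Finset.sum_le_sum fun s _ => ?_
          rw [abs_mul, abs_sub_comm]
          exact mul_le_mul_of_nonneg_left (hr s) (abs_nonneg _)
      _ = (∑ s, |μm t s - μ t s|) * R := by rw [Finset.sum_mul]
      _ ≤ (2 * t * εm) * R := mul_le_mul_of_nonneg_right (key t) hR
      _ = 2 * R * t * εm := by ring
  -- bound on each series term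
  have hbd : ∀ (ν : ℕ → S → ℝ), (∀ t, (∀ s, 0 ≤ ν t s) ∧ ∑ s, ν t s = 1) →
      ∀ t, |γ ^ t * ∑ s, ν t s * r s| ≤ R * γ ^ t := by
    intro ν hν t
    rw [abs_mul, abs_of_nonneg (pow_nonneg hγ0 t)]
    have : |∑ s, ν t s * r s| ≤ R := by
      calc |∑ s, ν t s * r s| ≤ ∑ s, |ν t s * r s| := Finset.abs_sum_le_sum_abs _ _
        _ ≤ ∑ s, ν t s * R := by
            refine Finset.sum_le_sum fun s _ => ?_
            rw [abs_mul, abs_of_nonneg ((hν t).1 s)]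
            exact mul_le_mul_of_nonneg_left (hr s) ((hν t).1 s)
        _ = R := by rw [← Finset.sum_mul, (hν t).2, one_mul]
    calc γ ^ t * |∑ s, ν t s * r s| ≤ γ ^ t * R :=
          mul_le_mul_of_nonneg_left this (pow_nonneg hγ0 t)
      _ = R * γ ^ t := mul_comm _ _
  have hgeo : Summable fun t : ℕ => R * γ ^ t :=
    (summable_geometric_of_lt_one hγ0 hγ1).mul_left R
  have hf : Summable fun t : ℕ => γ ^ t * ∑ s, μ t s * r s :=
    Summable.of_abs (hgeo.of_nonneg_of_le (fun t => abs_nonneg _) (hbd μ hμd))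
  have hg : Summable fun t : ℕ => γ ^ t * ∑ s, μm t s * r s :=
    Summable.of_abs (hgeo.of_nonneg_of_le (fun t => abs_nonneg _) (hbd μm hμmd))
  have hγn : ‖γ‖ < 1 := by rwa [Real.norm_eq_abs, abs_of_nonneg hγ0]
  have htg : HasSum (fun t : ℕ => (t : ℝ) * γ ^ t) (γ / (1 - γ) ^ 2) :=
    hasSum_coe_mul_geometric_of_norm_lt_one hγn
  have hbig : Summable fun t : ℕ => 2 * R * εm * ((t : ℝ) * γ ^ t) :=
    htg.summable.mul_left _
  have hterm : ∀ t : ℕ, |γ ^ t * (∑ s, μ t s * r s) - γ ^ t * ∑ s, μm t s * r s|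
      ≤ 2 * R * εm * ((t : ℝ) * γ ^ t) := by
    intro t
    rw [← mul_sub, abs_mul, abs_of_nonneg (pow_nonneg hγ0 t)]
    calc γ ^ t * |(∑ s, μ t s * r s) - ∑ s, μm t s * r s|
        ≤ γ ^ t * (2 * R * t * εm) :=
          mul_le_mul_of_nonneg_left (hgap t) (pow_nonneg hγ0 t)
      _ = 2 * R * εm * ((t : ℝ) * γ ^ t) := by ring
  have habs : Summable fun t : ℕ => |γ ^ t * (∑ s, μ t s * r s) - γ ^ t * ∑ s, μm t s * r s| :=
    hbig.of_nonneg_of_le (fun t => abs_nonneg _) hterm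
  rw [hJ, hJm, ← Summable.tsum_sub hf hg]
  calc |∑' t : ℕ, (γ ^ t * (∑ s, μ t s * r s) - γ ^ t * ∑ s, μm t s * r s)|
      ≤ ∑' t : ℕ, |γ ^ t * (∑ s, μ t s * r s) - γ ^ t * ∑ s, μm t s * r s| := by
        have habs' : Summable fun t : ℕ =>
            ‖γ ^ t * (∑ s, μ t s * r s) - γ ^ t * ∑ s, μm t s * r s‖ := by
          simpa [Real.norm_eq_abs] using habs
        simpa [Real.norm_eq_abs] using norm_tsum_le_tsum_norm habs'
    _ ≤ ∑' t : ℕ, 2 * R * εm * ((t : ℝ) * γ ^ t) := Summable.tsum_le_tsum hterm habs hbig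
    _ = 2 * R * εm * (γ / (1 - γ) ^ 2) := by rw [tsum_mul_left, htg.tsum_eq]
    _ = 2 * R * γ * εm / (1 - γ) ^ 2 := by ring
end

section
/- Let $S$ be a finite set, $P : S \to \Delta(S)$ a kernel, $\mu_0$ a pmf on $S$, and define $\mu^t = \mu_0 P^t$ by iterated pushforward. For two sequences of kernels: a fixed kernel $P$ versus a perturbed kernel $P_m$ with per-state TV error at most $\epsilon_m$, the discounted occupancy measures $\rho = (1-\gamma)\sum_{t\ge 0}\gamma^t \mu^t$ and $\rho_m = (1-\gamma)\sum_{t \ge 0}\gamma^t \mu_m^t$ satisfy $D_{TV}(\rho, \rho_m) \le \frac{\gamma\epsilon_m}{1-\gamma}$. -/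
/-!
Writing `μ_{t+1} - μ^m_{t+1} = P(μ_t - μ^m_t) + (P - P_m) μ^m_t`, a stochastic kernel does not
increase the `ℓ¹` distance and `P - P_m` moves the probability vector `μ^m_t` by at most
`2 ε_m`, so the errors compound linearly: `D_TV(μ_t, μ^m_t) ≤ t ε_m`. Averaging over `t` with
the weights `(1 - γ) γ^t`, whose mean is `γ / (1 - γ)`, gives the bound.
-/

open Finset

section

variable {S : Type*} [Fintype S]

noncomputable def tvDist (p q : S → ℝ) : ℝ := (1 / 2) * ∑ s, |p s - q s|

def pushforward (K : S → S → ℝ) (v : S → ℝ) : S → ℝ := fun s => ∑ s', K s' s * v s'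

noncomputable def discountedOccupancy (γ : ℝ) (μ : ℕ → S → ℝ) : S → ℝ :=
  fun s => (1 - γ) * ∑' t, γ ^ t * μ t s

lemma tvDist_nonneg (p q : S → ℝ) : 0 ≤ tvDist p q := by
  unfold tvDist
  positivity

lemma tvDist_comm (p q : S → ℝ) : tvDist p q = tvDist q p := by
  simp only [tvDist, abs_sub_comm]

lemma pushforward_mem_stdSimplex {K : S → S → ℝ} (hK_nonneg : ∀ s' s, 0 ≤ K s' s)
    (hK_sum : ∀ s', ∑ s, K s' s = 1) {v : S → ℝ} (hv : v ∈ stdSimplex ℝ S) :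
    pushforward K v ∈ stdSimplex ℝ S := by
  refine ⟨fun s => sum_nonneg fun s' _ => mul_nonneg (hK_nonneg s' s) (hv.1 s'), ?_⟩
  simp only [pushforward]
  rw [sum_comm]
  simp only [← sum_mul, hK_sum, one_mul, hv.2]

lemma mem_stdSimplex_of_pushforward_succ {K : S → S → ℝ} (hK_nonneg : ∀ s' s, 0 ≤ K s' s)
    (hK_sum : ∀ s', ∑ s, K s' s = 1) {μ : ℕ → S → ℝ} (h0 : μ 0 ∈ stdSimplex ℝ S)
    (hμ : ∀ t, μ (t + 1) = pushforward K (μ t)) (t : ℕ) : μ t ∈ stdSimplex ℝ S := by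
  induction t with
  | zero => exact h0
  | succ t ih => exact hμ t ▸ pushforward_mem_stdSimplex hK_nonneg hK_sum ih

lemma pushforward_sub_pushforward (P Q : S → S → ℝ) (μ ν : S → ℝ) :
    pushforward P μ - pushforward Q ν = pushforward P (μ - ν) + pushforward (P - Q) ν := by
  ext s
  simp only [pushforward, Pi.sub_apply, Pi.add_apply, ← sum_sub_distrib, ← sum_add_distrib]
  exact sum_congr rfl fun s' _ => by ring

lemma sum_abs_pushforward_le {K : S → S → ℝ} {c : ℝ} (hK : ∀ s', ∑ s, |K s' s| ≤ c)
    (v : S → ℝ) : ∑ s, |pushforward K v s| ≤ c * ∑ s, |v s| :=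
  calc ∑ s, |∑ s', K s' s * v s'|
      ≤ ∑ s, ∑ s', |K s' s| * |v s'| :=
        sum_le_sum fun s _ => (abs_sum_le_sum_abs _ _).trans_eq (by simp only [abs_mul])
    _ = ∑ s', (∑ s, |K s' s|) * |v s'| := by
        rw [sum_comm]
        simp only [sum_mul]
    _ ≤ ∑ s', c * |v s'| := sum_le_sum fun s' _ => by gcongr; exact hK s'
    _ = c * ∑ s, |v s| := (mul_sum _ _ _).symm

lemma tvDist_pushforward_le {P Q : S → S → ℝ} {ε : ℝ} (hP_nonneg : ∀ s' s, 0 ≤ P s' s)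
    (hP_sum : ∀ s', ∑ s, P s' s = 1) (hPQ : ∀ s', tvDist (Q s') (P s') ≤ ε)
    (μ : S → ℝ) {ν : S → ℝ} (hν : ν ∈ stdSimplex ℝ S) :
    tvDist (pushforward P μ) (pushforward Q ν) ≤ tvDist μ ν + ε := by
  have hP : ∀ s', ∑ s, |P s' s| ≤ 1 := fun s' => by
    simp only [abs_of_nonneg (hP_nonneg s' _), hP_sum, le_refl]
  have hPQ' : ∀ s', ∑ s, |(P - Q) s' s| ≤ 2 * ε := fun s' => by
    have := hPQ s'
    rw [tvDist_comm, tvDist] at this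
    simp only [Pi.sub_apply]
    linarith
  have hν_abs : ∑ s, |ν s| = 1 := by simp only [abs_of_nonneg (hν.1 _), hν.2]
  have hstay := sum_abs_pushforward_le hP (μ - ν)
  have hmove := sum_abs_pushforward_le hPQ' ν
  have hsplit : ∀ s, pushforward P μ s - pushforward Q ν s =
      pushforward P (μ - ν) s + pushforward (P - Q) ν s := fun s =>
    congrFun (pushforward_sub_pushforward P Q μ ν) s
  calc tvDist (pushforward P μ) (pushforward Q ν)
      ≤ (1 / 2) * (∑ s, |pushforward P (μ - ν) s| + ∑ s, |pushforward (P - Q) ν s|) := by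
        rw [tvDist, ← sum_add_distrib]
        gcongr with s
        exact (hsplit s).symm ▸ abs_add_le _ _
    _ ≤ tvDist μ ν + ε := by
        rw [hν_abs, mul_one] at hmove
        simp only [tvDist, Pi.sub_apply] at hstay ⊢
        linarith

lemma tvDist_le_mul_of_pushforward_succ {P Q : S → S → ℝ} {ε : ℝ}
    (hP_nonneg : ∀ s' s, 0 ≤ P s' s) (hP_sum : ∀ s', ∑ s, P s' s = 1)
    (hPQ : ∀ s', tvDist (Q s') (P s') ≤ ε) {μ ν : ℕ → S → ℝ} (h0 : μ 0 = ν 0)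
    (hμ : ∀ t, μ (t + 1) = pushforward P (μ t))
    (hν : ∀ t, ν (t + 1) = pushforward Q (ν t)) (hν_mem : ∀ t, ν t ∈ stdSimplex ℝ S)
    (t : ℕ) : tvDist (μ t) (ν t) ≤ t * ε := by
  induction t with
  | zero => simp [tvDist, h0]
  | succ t ih =>
    rw [hμ, hν]
    have hstep := tvDist_pushforward_le hP_nonneg hP_sum hPQ (μ t) (hν_mem t)
    push_cast
    linarith

lemma summable_pow_mul_of_abs_le {γ : ℝ} (hγ0 : 0 ≤ γ) (hγ1 : γ < 1) {f : ℕ → ℝ} {C : ℝ}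
    (hf : ∀ t, |f t| ≤ C) : Summable fun t => γ ^ t * f t :=
  ((summable_geometric_of_lt_one hγ0 hγ1).mul_left C).of_norm_bounded fun t => by
    rw [Real.norm_eq_abs, abs_mul, abs_pow, abs_of_nonneg hγ0, mul_comm]
    gcongr
    exact hf t

lemma sum_abs_tsum_le (f : ℕ → S → ℝ) (hf : ∀ s, Summable fun t => f t s) :
    ∑ s, |∑' t, f t s| ≤ ∑' t, ∑ s, |f t s| :=
  calc ∑ s, |∑' t, f t s|
      ≤ ∑ s, ∑' t, |f t s| := sum_le_sum fun s _ => by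
        simpa only [Real.norm_eq_abs] using norm_tsum_le_tsum_norm (hf s).norm
    _ = ∑' t, ∑ s, |f t s| := (Summable.tsum_finsetSum fun s _ => (hf s).abs).symm

lemma tvDist_discountedOccupancy_le {γ ε : ℝ} (hγ0 : 0 ≤ γ) (hγ1 : γ < 1)
    {μ ν : ℕ → S → ℝ} (hμ : ∀ s, Summable fun t => γ ^ t * μ t s)
    (hν : ∀ s, Summable fun t => γ ^ t * ν t s) (hd : ∀ t, tvDist (μ t) (ν t) ≤ t * ε) :
    tvDist (discountedOccupancy γ μ) (discountedOccupancy γ ν) ≤ γ * ε / (1 - γ) := by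
  have hγ : 0 < 1 - γ := by linarith
  have hγ_norm : ‖γ‖ < 1 := by rwa [Real.norm_eq_abs, abs_of_nonneg hγ0]
  have hdiff : ∀ s, Summable fun t => γ ^ t * (μ t s - ν t s) := fun s => by
    simpa only [mul_sub] using (hμ s).sub (hν s)
  have hweighted : ∀ t, γ ^ t * tvDist (μ t) (ν t) ≤ ε * (t * γ ^ t) := fun t =>
    calc γ ^ t * tvDist (μ t) (ν t) ≤ γ ^ t * (t * ε) := by gcongr; exact hd t
      _ = ε * (t * γ ^ t) := by ring
  have hsummable : Summable fun t : ℕ => ε * (t * γ ^ t) := by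
    simpa using (summable_pow_mul_geometric_of_norm_lt_one 1 hγ_norm).mul_left ε
  calc tvDist (discountedOccupancy γ μ) (discountedOccupancy γ ν)
      = (1 - γ) * ((1 / 2) * ∑ s, |∑' t, γ ^ t * (μ t s - ν t s)|) := by
        simp only [tvDist, discountedOccupancy, ← mul_sub, abs_mul, abs_of_pos hγ, ← mul_sum,
          ← (hμ _).tsum_sub (hν _)]
        ring
    _ ≤ (1 - γ) * ∑' t, γ ^ t * tvDist (μ t) (ν t) := by
        gcongr
        calc (1 / 2) * ∑ s, |∑' t, γ ^ t * (μ t s - ν t s)|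
            ≤ (1 / 2) * ∑' t, ∑ s, |γ ^ t * (μ t s - ν t s)| := by
              gcongr
              exact sum_abs_tsum_le _ hdiff
          _ = ∑' t, γ ^ t * tvDist (μ t) (ν t) := by
              rw [← tsum_mul_left]
              refine tsum_congr fun t => ?_
              simp only [tvDist, abs_mul, abs_pow, abs_of_nonneg hγ0, ← mul_sum]
              ring
    _ ≤ (1 - γ) * ∑' t : ℕ, ε * (t * γ ^ t) := by
        refine mul_le_mul_of_nonneg_left (Summable.tsum_le_tsum hweighted ?_ hsummable) hγ.le
        exact hsummable.of_nonneg_of_le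
          (fun t => mul_nonneg (pow_nonneg hγ0 t) (tvDist_nonneg _ _)) hweighted
    _ = γ * ε / (1 - γ) := by
        rw [tsum_mul_left, tsum_coe_mul_geometric_of_norm_lt_one hγ_norm]
        field_simp

lemma abs_le_one_of_mem_stdSimplex {v : S → ℝ} (hv : v ∈ stdSimplex ℝ S) (s : S) :
    |v s| ≤ 1 :=
  abs_le.mpr ⟨by linarith [hv.1 s], (mem_Icc_of_mem_stdSimplex hv s).2⟩

end

/-- Total variation bound between discounted occupancy measures of the true
and perturbed kernels. -/
theorem occupancy_measure_tv_bound
    {S : Type*} [Fintype S]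
    (P Pm : S → S → ℝ)      -- `P s' s` is the probability of `s` given `s'`
    (hP_nonneg : ∀ s' s, 0 ≤ P s' s) (hPm_nonneg : ∀ s' s, 0 ≤ Pm s' s)
    (hP_sum : ∀ s', ∑ s, P s' s = 1) (hPm_sum : ∀ s', ∑ s, Pm s' s = 1)
    (εm : ℝ)
    (hkernel : ∀ s', (1 / 2) * ∑ s, |Pm s' s - P s' s| ≤ εm)
    (μ0 : S → ℝ) (hμ0_nonneg : ∀ s, 0 ≤ μ0 s) (hμ0_sum : ∑ s, μ0 s = 1)
    (μ μm : ℕ → S → ℝ)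
    (hμ_init : μ 0 = μ0) (hμm_init : μm 0 = μ0)
    (hμ_rec : ∀ t s, μ (t + 1) s = ∑ s', P s' s * μ t s')
    (hμm_rec : ∀ t s, μm (t + 1) s = ∑ s', Pm s' s * μm t s')
    (γ : ℝ) (hγ0 : 0 ≤ γ) (hγ1 : γ < 1)
    (ρ ρm : S → ℝ)
    (hρ : ∀ s, ρ s = (1 - γ) * ∑' t : ℕ, γ ^ t * μ t s)
    (hρm : ∀ s, ρm s = (1 - γ) * ∑' t : ℕ, γ ^ t * μm t s) :
    (1 / 2) * ∑ s, |ρ s - ρm s| ≤ γ * εm / (1 - γ) := by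
  have hμ0 : μ0 ∈ stdSimplex ℝ S := ⟨hμ0_nonneg, hμ0_sum⟩
  have hμ_succ (t : ℕ) : μ (t + 1) = pushforward P (μ t) := funext (hμ_rec t)
  have hμm_succ (t : ℕ) : μm (t + 1) = pushforward Pm (μm t) := funext (hμm_rec t)
  have hμ_mem := mem_stdSimplex_of_pushforward_succ hP_nonneg hP_sum (hμ_init ▸ hμ0) hμ_succ
  have hμm_mem :=
    mem_stdSimplex_of_pushforward_succ hPm_nonneg hPm_sum (hμm_init ▸ hμ0) hμm_succ
  have hcompound : ∀ t, tvDist (μ t) (μm t) ≤ t * εm :=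
    tvDist_le_mul_of_pushforward_succ hP_nonneg hP_sum hkernel (hμ_init.trans hμm_init.symm)
      hμ_succ hμm_succ hμm_mem
  have hρ_eq : ρ = discountedOccupancy γ μ := funext hρ
  have hρm_eq : ρm = discountedOccupancy γ μm := funext hρm
  have hμ_summable (s : S) : Summable fun t => γ ^ t * μ t s :=
    summable_pow_mul_of_abs_le hγ0 hγ1 fun t => abs_le_one_of_mem_stdSimplex (hμ_mem t) s
  have hμm_summable (s : S) : Summable fun t => γ ^ t * μm t s :=
    summable_pow_mul_of_abs_le hγ0 hγ1 fun t => abs_le_one_of_mem_stdSimplex (hμm_mem t) s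
  simpa only [tvDist, hρ_eq, hρm_eq] using
    tvDist_discountedOccupancy_le hγ0 hγ1 hμ_summable hμm_summable hcompound
end
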